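/- arXiv:1911.08732 — 2 statements merged into one kernel-verified Lean document; each statement's English description precedes it below -/
import Mathlib

section
/- Let h be a fully-commutative decreasing factorization, and in the pairing process for the operator f_i^* let x be the largest unpaired letter of h^i. Then x-1 does not occur in h^{i+1}. -/
/-- One elementary relation of the 0-Hecke monoid applied somewhere inside a word
(letters are positive integers; `p + 1 < q ∨ q + 1 < p` encodes `|p - q| > 1`). -/
inductive HeckeStep : List ℕ → List ℕ → Prop
  | comm (u v : List ℕ) (p q : ℕ) (hpq : p + 1 < q ∨ q + 1 < p) :
      HeckeStep (u ++ p :: q :: v) (u ++ q :: p :: v)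
  | braid (u v : List ℕ) (p q : ℕ) :
      HeckeStep (u ++ p :: q :: p :: v) (u ++ q :: p :: q :: v)
  | idem (u v : List ℕ) (p : ℕ) :
      HeckeStep (u ++ p :: p :: v) (u ++ p :: v)

/-- 0-Hecke equivalence of words. -/
def HeckeEquiv : List ℕ → List ℕ → Prop := Relation.EqvGen HeckeStep

/-- A word contains a consecutive braid subword `i (i+1) i` or `(i+1) i (i+1)`
(the latter is the form `i (i-1) i`). -/
def ContainsBraid (w : List ℕ) : Prop :=
  ∃ (u v : List ℕ) (i : ℕ),
    w = u ++ i :: (i+1) :: i :: v ∨ w = u ++ (i+1) :: i :: (i+1) :: v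

/-- A word is fully-commutative if no 0-Hecke equivalent word contains a
consecutive braid subword. -/
def FullyCommutative (w : List ℕ) : Prop :=
  ∀ w', HeckeEquiv w w' → ¬ ContainsBraid w'

/-- The strictly decreasing word whose letters are the given finite set. -/
def descWord (s : Finset ℕ) : List ℕ := (s.sort (· ≤ ·)).reverse

/-- The Hecke word `h^m ⋯ h^2 h^1` of a decreasing factorization into `m` factors,
where (0-indexed) `h j` is the factor `h^{j+1}`; each factor is read as a strictly
decreasing word. -/
def factorWord (m : ℕ) (h : ℕ → Finset ℕ) : List ℕ :=
  ((List.range m).reverse.map (fun j => descWord (h j))).flatten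

/-- Pairing process: the letters of the upper factor, given as a list (largest
first), successively pair with the smallest yet-unpaired letter `≥` them in the
lower factor `rest`; returns the set of unpaired letters of the lower factor. -/
def pairAux : List ℕ → Finset ℕ → Finset ℕ
  | [], rest => rest
  | x :: xs, rest =>
    if hc : (rest.filter (fun a => x ≤ a)).Nonempty then
      pairAux xs (rest.erase ((rest.filter (fun a => x ≤ a)).min' hc))
    else pairAux xs rest

/-- Unpaired letters of the lower factor `a = h^i` after pairing with the upper
factor `b = h^{i+1}`. -/
def unpairedLow (a b : Finset ℕ) : Finset ℕ := pairAux (descWord b) a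

/-- The crystal operator `f^⋆` on the pair of factors `(a, b) = (h^i, h^{i+1})`. -/
def fStarPair (a b : Finset ℕ) : Option (Finset ℕ × Finset ℕ) :=
  if hU : (unpairedLow a b).Nonempty then
    let x := (unpairedLow a b).max' hU
    if x + 1 ∈ a ∧ x + 1 ∈ b then some (a.erase (x+1), insert x b)
    else some (a.erase x, insert x b)
  else none

/-- The crystal operator `f_{i+1}^⋆` (0-indexed `i`), acting on the factors
`h i` and `h (i+1)` of a decreasing factorization. -/
def fStar (i : ℕ) (h : ℕ → Finset ℕ) : Option (ℕ → Finset ℕ) :=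
  match fStarPair (h i) (h (i+1)) with
  | none => none
  | some (a, b) => some (Function.update (Function.update h i a) (i+1) b)

/-!
Suppose `x - 1 ∈ h^{i+1}` and let `[k, x)` be the maximal run of consecutive integers ending at
`x - 1` inside `h^{i+1}`. As `x` stays unpaired throughout, each letter `c < x` of `h^{i+1}` is
paired with a letter of `h^i` in `[c, x)`, and counting gives `[k, x] ⊆ h^i`. Then `h^{i+1} h^i`
reads `⋯ k C A (k+1) k ⋯`, where the letters of `C` are at most `k - 2` by maximality of the run
and those of `A` at least `k + 2`; commuting `C` to the right and `k` past `A` produces the braid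
`k (k+1) k`.
-/

open Finset

local infix:50 " ≃ₕ " => HeckeEquiv

theorem HeckeStep.append_append {w w' : List ℕ} (h : HeckeStep w w') (X Y : List ℕ) :
    HeckeStep (X ++ w ++ Y) (X ++ w' ++ Y) := by
  cases h with
  | comm u v p q hpq => simpa using HeckeStep.comm (X ++ u) (v ++ Y) p q hpq
  | braid u v p q => simpa using HeckeStep.braid (X ++ u) (v ++ Y) p q
  | idem u v p => simpa using HeckeStep.idem (X ++ u) (v ++ Y) p

theorem HeckeEquiv.append_append {w w' : List ℕ} (h : w ≃ₕ w') (X Y : List ℕ) :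
    X ++ w ++ Y ≃ₕ X ++ w' ++ Y := by
  induction h with
  | rel _ _ hs => exact .rel _ _ (hs.append_append X Y)
  | refl => exact .refl _
  | symm _ _ _ ih => exact .symm _ _ ih
  | trans _ _ _ _ _ ih₁ ih₂ => exact .trans _ _ _ ih₁ ih₂

instance : Trans HeckeEquiv HeckeEquiv HeckeEquiv := ⟨Relation.EqvGen.trans _ _ _⟩

theorem FullyCommutative.of_infix {X w Y : List ℕ} (h : FullyCommutative (X ++ w ++ Y)) :
    FullyCommutative w := by
  rintro w' hw' ⟨u, v, i, hb | hb⟩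
  · exact h _ (hw'.append_append X Y) ⟨X ++ u, v ++ Y, i, Or.inl (by simp [hb])⟩
  · exact h _ (hw'.append_append X Y) ⟨X ++ u, v ++ Y, i, Or.inr (by simp [hb])⟩

theorem heckeEquiv_append_singleton_comm {L : List ℕ} {p : ℕ}
    (hL : ∀ c ∈ L, c + 1 < p ∨ p + 1 < c) : L ++ [p] ≃ₕ p :: L := by
  induction L with
  | nil => exact .refl _
  | cons c L ih =>
    calc c :: L ++ [p]
        _ = [c] ++ (L ++ [p]) ++ [] := by simp
        _ ≃ₕ [c] ++ p :: L ++ [] :=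
          (ih fun d hd => hL d (List.mem_cons_of_mem c hd)).append_append _ _
        _ = [] ++ c :: p :: L := by simp
        _ ≃ₕ [] ++ p :: c :: L := .rel _ _ (.comm [] L c p (hL c List.mem_cons_self))

theorem heckeEquiv_append_comm {C M : List ℕ}
    (hCM : ∀ c ∈ C, ∀ d ∈ M, c + 1 < d ∨ d + 1 < c) : C ++ M ≃ₕ M ++ C := by
  induction M with
  | nil => simpa using .refl C
  | cons d M ih =>
    calc C ++ d :: M
        _ = [] ++ (C ++ [d]) ++ M := by simp
        _ ≃ₕ [] ++ d :: C ++ M :=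
          (heckeEquiv_append_singleton_comm fun c hc => hCM c hc d List.mem_cons_self).append_append
            _ _
        _ = [d] ++ (C ++ M) ++ [] := by simp
        _ ≃ₕ [d] ++ (M ++ C) ++ [] :=
          (ih fun c hc e he => hCM c hc e (List.mem_cons_of_mem d he)).append_append _ _
        _ = d :: M ++ C := by simp

theorem mem_descWord {s : Finset ℕ} {c : ℕ} : c ∈ descWord s ↔ c ∈ s := by
  simp [descWord]

theorem pairwise_gt_descWord (s : Finset ℕ) : (descWord s).Pairwise (· > ·) :=
  List.pairwise_reverse.2 s.sortedLT_sort.pairwise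

theorem descWord_eq_of_pairwise {s : Finset ℕ} {l : List ℕ} (hl : l.Pairwise (· > ·))
    (hs : ∀ c, c ∈ l ↔ c ∈ s) : descWord s = l :=
  (pairwise_gt_descWord s).eq_of_mem_iff hl fun c => by rw [mem_descWord, hs]

theorem length_filter_descWord (s : Finset ℕ) (p : ℕ → Prop) [DecidablePred p] :
    ((descWord s).filter p).length = #(s.filter p) := by
  rw [← List.toFinset_card_of_nodup ((pairwise_gt_descWord s).nodup.filter _),
    List.toFinset_filter]
  congr 1
  ext c
  simp [mem_descWord]

theorem descWord_eq_append_cons {s : Finset ℕ} {k : ℕ} (hk : k ∈ s) :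
    descWord s = descWord (s.filter (k < ·)) ++ k :: descWord (s.filter (· < k)) := by
  refine descWord_eq_of_pairwise ?_ fun c => ?_
  · simp only [List.pairwise_append, List.pairwise_cons, pairwise_gt_descWord, List.mem_cons,
      mem_descWord, mem_filter]
    grind
  · simp only [List.mem_append, List.mem_cons, mem_descWord, mem_filter]
    grind

theorem descWord_eq_append_cons_cons {s : Finset ℕ} {k : ℕ} (hk : k ∈ s) (hk' : k + 1 ∈ s) :
    descWord s =
      descWord (s.filter (k + 1 < ·)) ++ (k + 1) :: k :: descWord (s.filter (· < k)) := by
  refine descWord_eq_of_pairwise ?_ fun c => ?_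
  · simp only [List.pairwise_append, List.pairwise_cons, pairwise_gt_descWord, List.mem_cons,
      mem_descWord, mem_filter]
    grind
  · simp only [List.mem_append, List.mem_cons, mem_descWord, mem_filter]
    grind

theorem factorWord_eq_append {m i : ℕ} (h : ℕ → Finset ℕ) (hi : i + 1 < m) :
    ∃ X Y, factorWord m h = X ++ (descWord (h (i + 1)) ++ descWord (h i)) ++ Y := by
  obtain ⟨n, rfl⟩ := Nat.exists_eq_add_of_le hi
  refine ⟨((List.range n).reverse.map fun j => descWord (h (i + 2 + j))).flatten,
    ((List.range i).reverse.map fun j => descWord (h j)).flatten, ?_⟩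
  simp [factorWord, List.range_add, List.range_succ, Function.comp_def]

theorem not_fullyCommutative_descWord_append {a b : Finset ℕ} {k : ℕ} (hkb : k ∈ b)
    (hka : k ∈ a) (hka' : k + 1 ∈ a) (hgap : ∀ c ∈ b, c < k → c + 1 < k) :
    ¬ FullyCommutative (descWord b ++ descWord a) := by
  set B := descWord (b.filter (k < ·))
  set C := descWord (b.filter (· < k))
  set A := descWord (a.filter (k + 1 < ·))
  set D := descWord (a.filter (· < k))
  have hC : ∀ c ∈ C, ∀ d ∈ A ++ [k + 1, k], c + 1 < d ∨ d + 1 < c := by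
    simp only [C, A, mem_descWord, mem_filter, List.mem_append, List.mem_cons]
    grind
  have hA : ∀ c ∈ [k], ∀ d ∈ A, c + 1 < d ∨ d + 1 < c := by
    simp only [A, mem_descWord, mem_filter, List.mem_singleton]
    grind
  have hb : descWord b = B ++ k :: C := descWord_eq_append_cons hkb
  have ha : descWord a = A ++ (k + 1) :: k :: D := descWord_eq_append_cons_cons hka hka'
  intro hfc
  refine hfc (B ++ A ++ [k, k + 1, k] ++ (C ++ D)) ?_ ⟨B ++ A, C ++ D, k, .inl (by simp)⟩
  calc descWord b ++ descWord a
      _ = (B ++ [k]) ++ (C ++ (A ++ [k + 1, k])) ++ D := by simp [hb, ha]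
      _ ≃ₕ (B ++ [k]) ++ ((A ++ [k + 1, k]) ++ C) ++ D :=
        (heckeEquiv_append_comm hC).append_append _ _
      _ = B ++ ([k] ++ A) ++ ([k + 1, k] ++ C ++ D) := by simp
      _ ≃ₕ B ++ (A ++ [k]) ++ ([k + 1, k] ++ C ++ D) :=
        (heckeEquiv_append_comm hA).append_append _ _
      _ = B ++ A ++ [k, k + 1, k] ++ (C ++ D) := by simp

theorem pairAux_subset (l : List ℕ) (rest : Finset ℕ) : pairAux l rest ⊆ rest := by
  induction l generalizing rest with
  | nil => simp [pairAux]
  | cons c l ih =>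
    rw [pairAux]
    split
    · exact (ih _).trans (erase_subset _ _)
    · exact ih _

theorem length_filter_le_card_inter_of_mem_pairAux {l : List ℕ} {rest : Finset ℕ} {x : ℕ}
    (hx : x ∈ pairAux l rest) (y : ℕ) :
    (l.filter (· ∈ Ico y x)).length ≤ #(rest ∩ Ico y x) := by
  induction l generalizing rest with
  | nil => simp
  | cons c l ih =>
    have hxrest : x ∈ rest := pairAux_subset _ _ hx
    rw [pairAux] at hx
    split_ifs at hx with hne
    · set e := (rest.filter (c ≤ ·)).min' hne
      have he : e ∈ rest ∧ c ≤ e := mem_filter.1 (min'_mem _ hne)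
      have hIH := ih hx
      rw [erase_inter] at hIH
      by_cases hc : c ∈ Ico y x
      · have hex : e ≤ x := min'_le _ _ (mem_filter.2 ⟨hxrest, (mem_Ico.1 hc).2.le⟩)
        have hne : e ≠ x := by
          rintro rfl
          exact notMem_erase e rest (pairAux_subset _ _ hx)
        -- `x` is still unpaired, so the partner `e` of `c` lies in `[c, x)`
        have hpartner : e ∈ rest ∩ Ico y x := by
          simp only [mem_inter, mem_Ico] at hc ⊢
          exact ⟨he.1, by omega, by omega⟩
        rw [card_erase_of_mem hpartner] at hIH
        have := card_pos.2 ⟨e, hpartner⟩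
        rw [List.filter_cons_of_pos (by simpa using hc), List.length_cons]
        omega
      · rw [List.filter_cons_of_neg (by simpa using hc)]
        exact hIH.trans card_erase_le
    · have hc : c ∉ Ico y x := fun hc =>
        hne ⟨x, mem_filter.2 ⟨hxrest, (mem_Ico.1 hc).2.le⟩⟩
      rw [List.filter_cons_of_neg (by simpa using hc)]
      exact ih hx

theorem card_inter_Ico_le_of_mem_unpairedLow {a b : Finset ℕ} {x : ℕ}
    (hx : x ∈ unpairedLow a b) (y : ℕ) : #(b ∩ Ico y x) ≤ #(a ∩ Ico y x) := by
  have := length_filter_le_card_inter_of_mem_pairAux hx y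
  rwa [length_filter_descWord, filter_mem_eq_inter] at this

theorem Ico_subset_of_mem_unpairedLow {a b : Finset ℕ} {x y : ℕ} (hx : x ∈ unpairedLow a b)
    (hb : Ico y x ⊆ b) : Ico y x ⊆ a := by
  have hcard := card_inter_Ico_le_of_mem_unpairedLow hx y
  rw [inter_eq_right.2 hb] at hcard
  exact inter_eq_right.1 (eq_of_subset_of_card_le inter_subset_right hcard)

theorem exists_maximal_Ico_subset_of_mem {s : Finset ℕ} {y : ℕ} (hy : y ∈ s) :
    ∃ k ≤ y, Ico k (y + 1) ⊆ s ∧ ∀ c ∈ s, c < k → c + 1 < k := by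
  have hex : ∃ k, Ico k (y + 1) ⊆ s := ⟨y, by simpa⟩
  have hky : Nat.find hex ≤ y := Nat.find_min' hex (by simpa)
  refine ⟨Nat.find hex, hky, Nat.find_spec hex, fun c hc hck => ?_⟩
  by_contra hgap
  have hck' : c + 1 = Nat.find hex := by omega
  refine Nat.find_min hex hck ?_
  rw [← insert_Ico_add_one_left_eq_Ico (by omega : c < y + 1), hck']
  exact insert_subset hc (Nat.find_spec hex)

/-- If `x` is the largest unpaired letter of `h^i` in the pairing process for
`f_i^⋆` on a fully-commutative decreasing factorization, then `x - 1` does not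
occur in `h^{i+1}` (0-indexed: factors `h i` and `h (i+1)`). -/
theorem largest_unpaired_pred_not_mem (m i : ℕ) (h : ℕ → Finset ℕ)
    (hi : i + 1 < m)
    (hfc : FullyCommutative (factorWord m h))
    (hU : (unpairedLow (h i) (h (i+1))).Nonempty) :
    ∀ y ∈ h (i+1), y + 1 ≠ (unpairedLow (h i) (h (i+1))).max' hU := by
  intro y hy hyx
  set x := (unpairedLow (h i) (h (i+1))).max' hU
  have hxU : x ∈ unpairedLow (h i) (h (i+1)) := max'_mem _ hU
  obtain ⟨k, hky, hrun, hgap⟩ := exists_maximal_Ico_subset_of_mem hy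
  rw [hyx] at hrun
  have hrun' : Icc k x ⊆ h i := by
    rw [← Ico_insert_right (by omega)]
    exact insert_subset (pairAux_subset _ _ hxU) (Ico_subset_of_mem_unpairedLow hxU hrun)
  obtain ⟨X, Y, hw⟩ := factorWord_eq_append h hi
  refine not_fullyCommutative_descWord_append (hrun ?_) (hrun' ?_) (hrun' ?_) hgap
    (FullyCommutative.of_infix (hw ▸ hfc)) <;> simp only [mem_Ico, mem_Icc] <;> omega
end

section
/- Let P be a tableau with strictly increasing rows whose transpose is semistandard, with fully-commutative row reading word row(P), and let x be a letter such that row(P)·x is fully-commutative. Then the row reading word of the *-insertion P ← x is 0-Hecke equivalent to row(P)·x. -/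
/-- The smallest entry of `R` that is larger than `x` (junk value `0` if none). -/
def minGT (R : List ℕ) (x : ℕ) : ℕ := ((R.filter (fun y => x < y)).min?).getD 0

/-- The smallest `y ≤ x` such that the whole interval `[y, x]` is contained in `R`. -/
noncomputable def intervalMin (R : List ℕ) (x : ℕ) : ℕ :=
  sInf {y | y ≤ x ∧ ∀ z, y ≤ z → z ≤ x → z ∈ R}

/-- `⋆`-insertion of a letter `x` into a single row `R`: returns the new row and
the letter (if any) bumped into the next row.  Case 1: if `R` is empty or
`x > max R`, append `x`.  Case 3: if `x ∈ R`, leave `R` unchanged and bump the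
smallest `y` with `[y,x] ⊆ R`.  Case 2: otherwise replace the smallest `y > x`
by `x` and bump `y`. -/
noncomputable def insertRow (R : List ℕ) (x : ℕ) : List ℕ × Option ℕ :=
  if ∀ y ∈ R, y < x then (R ++ [x], none)
  else if x ∈ R then (R, some (intervalMin R x))
  else (R.map (fun y => if y = minGT R x then x else y), some (minGT R x))

/-- `⋆`-insertion of a letter into a tableau, whose rows are listed bottom row
first (French notation). -/
noncomputable def insertTab : List (List ℕ) → ℕ → List (List ℕ)
  | [], x => [[x]]
  | R :: rest, x =>
    match (insertRow R x).2 with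
    | none => (insertRow R x).1 :: rest
    | some y => (insertRow R x).1 :: insertTab rest y

/-- The row reading word: rows are read from the top row down (French notation),
each row from left to right. -/
def rowWord (T : List (List ℕ)) : List ℕ := T.reverse.flatten

/-- `T` (rows listed bottom row first) is a tableau with strictly increasing rows
whose transpose is semistandard: rows are nonempty with weakly decreasing lengths
going up, rows strictly increase, and columns weakly increase going up. -/
def TransposeSSYT (T : List (List ℕ)) : Prop :=
  (∀ R ∈ T, R ≠ []) ∧
  List.Chain' (fun a b => b ≤ a) (T.map List.length) ∧
  (∀ R ∈ T, List.Chain' (· < ·) R) ∧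
  (∀ r c, r + 1 < T.length → c < (T.getD (r+1) []).length →
    (T.getD r []).getD c 0 ≤ (T.getD (r+1) []).getD c 0)

/-- `T` (rows listed bottom row first) is a semistandard Young tableau: rows are
nonempty with weakly decreasing lengths going up, rows weakly increase, and
columns strictly increase going up. -/
def IsSSYT (T : List (List ℕ)) : Prop :=
  (∀ R ∈ T, R ≠ []) ∧
  List.Chain' (fun a b => b ≤ a) (T.map List.length) ∧
  (∀ R ∈ T, List.Chain' (· ≤ ·) R) ∧
  (∀ r c, r + 1 < T.length → c < (T.getD (r+1) []).length →
    (T.getD r []).getD c 0 < (T.getD (r+1) []).getD c 0)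


/-!
Insertion is analysed one row at a time. If inserting `x` into a strictly increasing row `R`
produces the row `R'` and bumps `y`, then `R·x ≡ y·R'`. When `x ∉ R`, the bumped letter `y`
and the new letter `x` just commute into place. When `x ∈ R`, both `R·x` and `y·R` collapse to
`R` by idempotence: `x` commutes leftwards to its copy unless `x + 1 ∈ R`, which would make
`R·x` equivalent to a word containing the braid `x (x+1) x`, and `y` commutes rightwards to its
copy because `y - 1 ∉ R` by minimality of `y`. Induction on the rows then propagates the
equivalence, full commutativity passing to the word `row(rest)·y` of the remaining rows.
-/

theorem HeckeStep.append_append_s10 {a b : List ℕ} (h : HeckeStep a b) (u v : List ℕ) :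
    HeckeStep (u ++ a ++ v) (u ++ b ++ v) := by
  cases h with
  | comm s t p q hpq => simpa using HeckeStep.comm (u ++ s) (t ++ v) p q hpq
  | braid s t p q => simpa using HeckeStep.braid (u ++ s) (t ++ v) p q
  | idem s t p => simpa using HeckeStep.idem (u ++ s) (t ++ v) p

namespace HeckeEquiv

theorem refl (w : List ℕ) : HeckeEquiv w w := Relation.EqvGen.refl w

theorem symm {a b : List ℕ} (h : HeckeEquiv a b) : HeckeEquiv b a := Relation.EqvGen.symm a b h

theorem trans {a b c : List ℕ} (hab : HeckeEquiv a b) (hbc : HeckeEquiv b c) :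
    HeckeEquiv a c :=
  Relation.EqvGen.trans a b c hab hbc

instance : Trans HeckeEquiv HeckeEquiv HeckeEquiv := ⟨trans⟩

theorem append_append_s10 {a b : List ℕ} (h : HeckeEquiv a b) (u v : List ℕ) :
    HeckeEquiv (u ++ a ++ v) (u ++ b ++ v) := by
  induction h with
  | rel a b h => exact .rel _ _ (h.append_append_s10 u v)
  | refl a => exact refl _
  | symm a b _ ih => exact ih.symm
  | trans a b c _ _ ihab ihbc => exact ihab.trans ihbc

theorem append_left {a b : List ℕ} (u : List ℕ) (h : HeckeEquiv a b) :
    HeckeEquiv (u ++ a) (u ++ b) := by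
  simpa using h.append_append_s10 u []

theorem append_right {a b : List ℕ} (v : List ℕ) (h : HeckeEquiv a b) :
    HeckeEquiv (a ++ v) (b ++ v) := by
  simpa using h.append_append_s10 [] v

theorem idem (p : ℕ) (v : List ℕ) : HeckeEquiv (p :: p :: v) (p :: v) :=
  .rel _ _ (HeckeStep.idem [] v p)

theorem cons_eq_append_singleton {x : ℕ} {A : List ℕ}
    (hA : ∀ a ∈ A, a + 1 < x ∨ x + 1 < a) : HeckeEquiv (x :: A) (A ++ [x]) := by
  induction A with
  | nil => exact refl _
  | cons a A ih =>
    have hxa : HeckeEquiv (x :: a :: A) (a :: x :: A) :=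
      .rel _ _ (by simpa using HeckeStep.comm [] A x a (hA a (by simp)).symm)
    exact hxa.trans ((ih fun b hb => hA b (by simp [hb])).append_left [a])

end HeckeEquiv

theorem ContainsBraid.append_append_s10 {w : List ℕ} (h : ContainsBraid w) (u v : List ℕ) :
    ContainsBraid (u ++ w ++ v) := by
  obtain ⟨s, t, i, rfl | rfl⟩ := h
  · exact ⟨u ++ s, t ++ v, i, Or.inl (by simp)⟩
  · exact ⟨u ++ s, t ++ v, i, Or.inr (by simp)⟩

namespace FullyCommutative

theorem of_heckeEquiv {w w' : List ℕ} (h : FullyCommutative w) (e : HeckeEquiv w w') :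
    FullyCommutative w' :=
  fun w'' e' => h w'' (e.trans e')

theorem of_infix_s10 {v w : List ℕ} (h : FullyCommutative w) (hvw : v <:+: w) :
    FullyCommutative v := by
  obtain ⟨s, t, rfl⟩ := hvw
  exact fun v' e hv' => h _ (e.append_append_s10 s t) (hv'.append_append_s10 s t)

theorem not_heckeEquiv_braid {w u v : List ℕ} {i : ℕ} (h : FullyCommutative w) :
    ¬ HeckeEquiv w (u ++ i :: (i + 1) :: i :: v) :=
  fun e => h _ e ⟨u, v, i, Or.inl rfl⟩

end FullyCommutative

section Row

variable {R : List ℕ} {x y : ℕ}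

theorem heckeEquiv_append_singleton_of_mem (hR : R.Pairwise (· < ·)) (hx : x ∈ R)
    (hfc : FullyCommutative (R ++ [x])) : HeckeEquiv (R ++ [x]) R := by
  obtain ⟨L, B, rfl⟩ := List.append_of_mem hx
  have hxB : ∀ b ∈ B, x < b := (List.pairwise_cons.mp (List.pairwise_append.mp hR).2.1).1
  have absorb (hB : ∀ b ∈ B, x + 1 < b) :
      HeckeEquiv (x :: B ++ [x]) (x :: x :: B) :=
    ((HeckeEquiv.cons_eq_append_singleton fun b hb => Or.inr (hB b hb)).append_left [x]).symm
  rcases B with _ | ⟨b, B⟩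
  · simpa using (HeckeEquiv.idem x []).append_left L
  have hbB : ∀ c ∈ B, b < c :=
    (List.pairwise_cons.mp (List.pairwise_cons.mp (List.pairwise_append.mp hR).2.1).2).1
  by_cases hb : b = x + 1
  · subst hb
    have hbraid : HeckeEquiv (x :: (x + 1) :: B ++ [x]) (x :: (x + 1) :: x :: B) :=
      ((HeckeEquiv.cons_eq_append_singleton fun c hc => Or.inr (hbB c hc)).append_left
        [x, x + 1]).symm
    exact absurd (by simpa using hbraid.append_left L) hfc.not_heckeEquiv_braid
  · have hB : ∀ c ∈ b :: B, x + 1 < c := by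
      simp only [List.mem_cons, forall_eq_or_imp]
      have := hxB b (by simp)
      exact ⟨by omega, fun c hc => by have := hbB c hc; omega⟩
    simpa using ((absorb hB).trans (HeckeEquiv.idem x _)).append_left L

theorem heckeEquiv_cons_of_mem (hR : R.Pairwise (· < ·)) (hy : y ∈ R)
    (hgap : ∀ a ∈ R, a + 1 ≠ y) : HeckeEquiv (y :: R) R := by
  obtain ⟨A, C, rfl⟩ := List.append_of_mem hy
  have hA : ∀ a ∈ A, a + 1 < y ∨ y + 1 < a := fun a ha => by
    have hlt := (List.pairwise_append.mp hR).2.2 a ha y (by simp)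
    have hne := hgap a (by simp [ha])
    omega
  calc HeckeEquiv (y :: (A ++ y :: C)) (A ++ y :: y :: C) := by
        simpa using (HeckeEquiv.cons_eq_append_singleton hA).append_right (y :: C)
    HeckeEquiv _ (A ++ y :: C) := (HeckeEquiv.idem y C).append_left A

theorem heckeEquiv_append_singleton_cons {A B : List ℕ} {m : ℕ}
    (hA : ∀ a ∈ A, a + 1 < m) (hB : ∀ b ∈ B, x + 1 < b) :
    HeckeEquiv (A ++ m :: B ++ [x]) (m :: (A ++ x :: B)) :=
  calc HeckeEquiv (A ++ m :: B ++ [x]) (A ++ m :: x :: B) := by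
        simpa using ((HeckeEquiv.cons_eq_append_singleton fun b hb =>
          Or.inr (hB b hb)).append_left (A ++ [m])).symm
    HeckeEquiv _ (m :: (A ++ x :: B)) := by
        simpa using (HeckeEquiv.cons_eq_append_singleton fun a ha =>
          Or.inl (hA a ha)).append_right (x :: B) |>.symm

end Row

section Insertion

variable {R : List ℕ} {x y : ℕ}

theorem intervalMin_spec (hx : x ∈ R) :
    intervalMin R x ≤ x ∧ ∀ z, intervalMin R x ≤ z → z ≤ x → z ∈ R :=
  Nat.sInf_mem (s := {y | y ≤ x ∧ ∀ z, y ≤ z → z ≤ x → z ∈ R})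
    ⟨x, le_rfl, fun _ hxz hzx => le_antisymm hzx hxz ▸ hx⟩

theorem intervalMin_mem (hx : x ∈ R) : intervalMin R x ∈ R :=
  (intervalMin_spec hx).2 _ le_rfl (intervalMin_spec hx).1

theorem intervalMin_le {a : ℕ} (hax : a ≤ x) (hint : ∀ z, a ≤ z → z ≤ x → z ∈ R) :
    intervalMin R x ≤ a :=
  Nat.sInf_le (s := {y | y ≤ x ∧ ∀ z, y ≤ z → z ≤ x → z ∈ R}) ⟨hax, hint⟩

theorem succ_ne_intervalMin {a : ℕ} (hx : x ∈ R) (ha : a ∈ R) :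
    a + 1 ≠ intervalMin R x := by
  intro hay
  obtain ⟨hyx, hint⟩ := intervalMin_spec hx
  have : intervalMin R x ≤ a := intervalMin_le (by omega) fun z haz hzx => by
    rcases haz.eq_or_lt with rfl | haz
    · exact ha
    · exact hint z (by omega) hzx
  omega

theorem minGT_spec (h : ∃ b ∈ R, x < b) :
    minGT R x ∈ R ∧ x < minGT R x ∧ ∀ b ∈ R, x < b → minGT R x ≤ b := by
  obtain ⟨b, hbR, hxb⟩ := h
  rcases hmin : (R.filter (fun y => x < y)).min? with _ | m
  · have : b ∈ R.filter (fun y => x < y) := List.mem_filter.mpr ⟨hbR, by simpa using hxb⟩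
    simp [List.min?_eq_none_iff.mp hmin] at this
  · obtain ⟨hm, hle⟩ := List.min?_eq_some_iff.mp hmin
    simp only [List.mem_filter, decide_eq_true_eq] at hm hle
    simp only [minGT, hmin, Option.getD_some]
    exact ⟨hm.1, hm.2, fun c hc hxc => hle c ⟨hc, hxc⟩⟩

theorem insertRow_of_forall_lt (h : ∀ y ∈ R, y < x) : insertRow R x = (R ++ [x], none) :=
  if_pos h

theorem insertRow_of_mem (hx : x ∈ R) : insertRow R x = (R, some (intervalMin R x)) := by
  rw [insertRow, if_neg fun h => (h x hx).false, if_pos hx]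

theorem insertRow_of_not_mem (h : ¬ ∀ y ∈ R, y < x) (hx : x ∉ R) :
    insertRow R x =
      (R.map (fun y => if y = minGT R x then x else y), some (minGT R x)) := by
  rw [insertRow, if_neg h, if_neg hx]

theorem map_replace_append_cons {A B : List ℕ} {m : ℕ} (hA : m ∉ A) (hB : m ∉ B) :
    (A ++ m :: B).map (fun y => if y = m then x else y) = A ++ x :: B := by
  have hid : ∀ l : List ℕ, m ∉ l → l.map (fun y => if y = m then x else y) = l :=
    fun l hl => (List.map_congr_left fun y hy => if_neg fun (h : y = m) => hl (h ▸ hy)).trans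
      (List.map_id' l)
  simp [hid A hA, hid B hB]

theorem heckeEquiv_append_singleton_replace {m : ℕ} (hR : R.Pairwise (· < ·)) (hx : x ∉ R)
    (hm : m ∈ R) (hxm : x < m) (hmin : ∀ b ∈ R, x < b → m ≤ b) :
    HeckeEquiv (R ++ [x]) (m :: R.map (fun y => if y = m then x else y)) := by
  obtain ⟨A, B, rfl⟩ := List.append_of_mem hm
  have hAm : ∀ a ∈ A, a < m := fun a ha => (List.pairwise_append.mp hR).2.2 a ha m (by simp)
  have hBm : ∀ b ∈ B, m < b := (List.pairwise_cons.mp (List.pairwise_append.mp hR).2.1).1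
  rw [map_replace_append_cons (fun h => (hAm m h).false) (fun h => (hBm m h).false)]
  refine heckeEquiv_append_singleton_cons (fun a ha => ?_) (fun b hb => ?_)
  · have hax : a ≠ x := fun h => hx (by simp [← h, ha])
    have hxa : ¬ x < a := fun h => (hmin a (by simp [ha]) h).not_gt (hAm a ha)
    omega
  · have := hBm b hb
    omega

theorem heckeEquiv_insertRow (hR : R.Pairwise (· < ·)) (hfc : FullyCommutative (R ++ [x]))
    (hy : (insertRow R x).2 = some y) : HeckeEquiv (R ++ [x]) (y :: (insertRow R x).1) := by
  by_cases hx : x ∈ R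
  · rw [insertRow_of_mem hx, Option.some_inj] at hy
    rw [insertRow_of_mem hx, ← hy]
    exact (heckeEquiv_append_singleton_of_mem hR hx hfc).trans
      (heckeEquiv_cons_of_mem hR (intervalMin_mem hx) fun a ha => succ_ne_intervalMin hx ha).symm
  by_cases hlt : ∀ y ∈ R, y < x
  · simp [insertRow_of_forall_lt hlt] at hy
  rw [insertRow_of_not_mem hlt hx, Option.some_inj] at hy
  rw [insertRow_of_not_mem hlt hx, ← hy]
  have hgt : ∃ b ∈ R, x < b := by
    push Not at hlt
    obtain ⟨b, hb, hxb⟩ := hlt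
    exact ⟨b, hb, hxb.lt_of_ne fun h => hx (h ▸ hb)⟩
  obtain ⟨hm, hxm, hmin⟩ := minGT_spec hgt
  exact heckeEquiv_append_singleton_replace hR hx hm hxm hmin

theorem insertRow_fst_of_snd_eq_none (h : (insertRow R x).2 = none) :
    (insertRow R x).1 = R ++ [x] := by
  unfold insertRow at h ⊢
  split_ifs at h ⊢
  rfl

end Insertion

theorem rowWord_cons (R : List ℕ) (T : List (List ℕ)) : rowWord (R :: T) = rowWord T ++ R := by
  simp [rowWord]

theorem heckeEquiv_rowWord_insertTab (P : List (List ℕ)) (x : ℕ)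
    (hrows : ∀ R ∈ P, R.Pairwise (· < ·)) (hfc : FullyCommutative (rowWord P ++ [x])) :
    HeckeEquiv (rowWord (insertTab P x)) (rowWord P ++ [x]) := by
  induction P generalizing x with
  | nil => exact HeckeEquiv.refl _
  | cons R T ih =>
    rw [rowWord_cons, List.append_assoc] at hfc ⊢
    rcases hbump : (insertRow R x).2 with _ | y
    · rw [insertTab, hbump, rowWord_cons, insertRow_fst_of_snd_eq_none hbump]
      exact HeckeEquiv.refl _
    rw [insertTab, hbump, rowWord_cons]
    have hrow : HeckeEquiv (R ++ [x]) (y :: (insertRow R x).1) :=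
      heckeEquiv_insertRow (hrows R (by simp)) (hfc.of_infix_s10 (List.suffix_append _ _).isInfix)
        hbump
    have hfcy : FullyCommutative (rowWord T ++ [y]) :=
      (hfc.of_heckeEquiv (hrow.append_left _)).of_infix_s10 ⟨[], (insertRow R x).1, by simp⟩
    calc HeckeEquiv (rowWord (insertTab T y) ++ (insertRow R x).1)
          (rowWord T ++ [y] ++ (insertRow R x).1) :=
        (ih y (fun S hS => hrows S (by simp [hS])) hfcy).append_right _
      HeckeEquiv _ (rowWord T ++ (R ++ [x])) := by
        simpa using (hrow.append_left (rowWord T)).symm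

theorem rowWord_insertTab_heckeEquiv_general (P : List (List ℕ)) (x : ℕ)
    (hP : TransposeSSYT P)
    (hfcx : FullyCommutative (rowWord P ++ [x])) :
    HeckeEquiv (rowWord (insertTab P x)) (rowWord P ++ [x]) :=
  heckeEquiv_rowWord_insertTab P x (fun R hR => List.isChain_iff_pairwise.mp (hP.2.2.1 R hR)) hfcx

/-- If `P` is a tableau with strictly increasing rows whose transpose is
semistandard and whose row reading word is fully-commutative, and `row(P)·x` is
fully-commutative, then the row reading word of `P ← x` (the `⋆`-insertion of
`x` into `P`) is 0-Hecke equivalent to `row(P)·x`. -/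
theorem rowWord_insertTab_heckeEquiv (P : List (List ℕ)) (x : ℕ)
    (hP : TransposeSSYT P)
    (hfc : FullyCommutative (rowWord P))
    (hfcx : FullyCommutative (rowWord P ++ [x])) :
    HeckeEquiv (rowWord (insertTab P x)) (rowWord P ++ [x]) :=
  rowWord_insertTab_heckeEquiv_general P x hP hfcx
end
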